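/- arXiv:0901.2602 — 3 statements merged into one kernel-verified Lean document; each statement's English description precedes it below -/
import Mathlib

section
/- Let p be a prime, G an abelian group, X a set on which G acts, and F : X → ℝ/ℤ a function such that the p-fold additive derivative vanishes: Δ_{h₁}⋯Δ_{h_p} F = 0 for all h₁,…,h_p ∈ G, where Δ_h F(x) = F(h·x) − F(x). Suppose moreover that g^p acts trivially for every g ∈ G. Then for every g ∈ G, Δ_g (p·F) = 0, i.e., p·F is invariant under the G-action. -/
/-- The additive derivative `Δ_h F (x) = F(h • x) − F(x)` of an `ℝ/ℤ`-valued function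
on a `G`-space. -/
noncomputable def aderiv {G X : Type*} [SMul G X] (h : G) (F : X → UnitAddCircle) : X → UnitAddCircle :=
  fun x => F (h • x) - F x

/-!
Fix `g`, let `T` be translation by `g` on functions `X → ℝ/ℤ` and `D = T - 1 = Δ_g`, so that
`D ^ p F = 0` and `(D + 1) ^ p F = T ^ p F = F`. Since `p` divides the inner binomial
coefficients, `(X + 1) ^ p - 1 - X ^ p = p X r(X)` with `r(0) = 1`; modulo `X ^ p` the factor `r`
is a unit, so `p X` lies in the ideal `(X ^ p, (X + 1) ^ p - 1)` of `ℤ[X]`. Evaluating at `D` and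
applying the result to `F` gives `p • Δ_g F = 0`.
-/

open Finset Polynomial

theorem natCast_mul_eq_zero_of_pow_eq_zero_of_add_one_pow_eq_one {S : Type*} [CommRing S]
    {p : ℕ} (hp : p.Prime) {d : S} (hd : d ^ p = 0) (h : (d + 1) ^ p = 1) : (p : S) * d = 0 := by
  set r := ∑ k ∈ Ioo 0 p, d ^ (k - 1) * 1 ^ (p - k - 1) * ((p.choose k / p : ℕ) : S) with hr
  have hpdr : (p : S) * d * r = 0 := by
    have := add_pow_prime_eq hp d 1
    rw [h, hd, one_pow, mul_one, ← hr] at this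
    linear_combination -this
  have hr_sub : d ∣ r - 1 := by
    rw [hr, ← Ico_add_one_left_eq_Ioo, zero_add, sum_eq_sum_Ico_succ_bot hp.one_lt]
    simp only [Nat.sub_self, pow_zero, one_pow, Nat.choose_one_right, Nat.div_self hp.pos,
      Nat.cast_one, mul_one, add_sub_cancel_left]
    exact dvd_sum fun k hk => dvd_mul_of_dvd_left (dvd_pow_self d (by grind)) _
  obtain ⟨c, hc⟩ := hr_sub
  have hunit : IsUnit r := by
    rw [← sub_add_cancel r 1, hc]
    exact ((Commute.all d c).isNilpotent_mul_right ⟨p, hd⟩).isUnit_add_one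
  exact hunit.mul_left_eq_zero.mp hpdr

theorem Polynomial.natCast_mul_X_mem_span_X_pow_add_one_pow (R : Type*) [CommRing R] {p : ℕ}
    (hp : p.Prime) : (p : R[X]) * X ∈ Ideal.span {X ^ p, (X + 1) ^ p - 1} := by
  rw [← Ideal.Quotient.eq_zero_iff_mem, map_mul, map_natCast]
  apply natCast_mul_eq_zero_of_pow_eq_zero_of_add_one_pow_eq_one hp
  · rw [← map_pow, Ideal.Quotient.eq_zero_iff_mem]
    exact Ideal.subset_span (by simp)
  · rw [← map_one (Ideal.Quotient.mk _), ← map_add, ← map_pow, ← sub_eq_zero, ← map_sub,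
      Ideal.Quotient.eq_zero_iff_mem]
    exact Ideal.subset_span (by simp)

theorem natCast_mul_smul_eq_zero_of_pow_smul_eq_zero {E M : Type*} [Ring E] [AddCommGroup M]
    [Module E M] {p : ℕ} (hp : p.Prime) {D : E} {m : M} (hD : D ^ p • m = 0)
    (hT : (D + 1) ^ p • m = m) : ((p : E) * D) • m = 0 := by
  obtain ⟨a, b, hab⟩ := Ideal.mem_span_pair.mp (natCast_mul_X_mem_span_X_pow_add_one_pow ℤ hp)
  have := congrArg (aeval D) hab
  simp only [map_add, map_mul, map_sub, map_pow, map_natCast, map_one, aeval_X] at this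
  rw [← this, add_smul, mul_smul, hD, mul_smul, sub_smul, hT, one_smul, sub_self, smul_zero,
    smul_zero, add_zero]

section
variable {G X : Type*} [Monoid G] [MulAction G X]

theorem LinearMap.funLeft_smul_pow_apply {A : Type*} [AddCommGroup A] (g : G) (n : ℕ)
    (F : X → A) (x : X) : (funLeft ℤ A (g • · : X → X) ^ n) F x = F (g ^ n • x) := by
  induction n generalizing F with
  | zero => simp
  | succ n ih => rw [pow_succ, Module.End.mul_apply, ih, funLeft_apply, smul_smul, ← pow_succ']

theorem LinearMap.funLeft_smul_sub_one_pow_eq_foldr_aderiv (g : G) (k : ℕ)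
    (F : X → UnitAddCircle) :
    ((funLeft ℤ UnitAddCircle (g • · : X → X) - 1) ^ k) F = (List.replicate k g).foldr aderiv F := by
  induction k with
  | zero => simp
  | succ k ih => rw [pow_succ', Module.End.mul_apply, ih, List.replicate_succ, List.foldr_cons]; rfl

end

/-- **Discreteness of values, part (i), logarithmic form.**  Let `p` be a prime, `G` an
abelian group acting on a set `X` and `F : X → ℝ/ℤ` with all `p`-fold additive
derivatives vanishing.  If `g ^ p` acts trivially for every `g ∈ G`, then
`Δ_g (p • F) = 0` for every `g`, i.e. `p • F` is invariant under the `G`-action. -/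
theorem smul_invariant_of_poly_lt_p {G X : Type*} [CommGroup G] [MulAction G X]
    (p : ℕ) (hp : p.Prime) (F : X → UnitAddCircle)
    (hdeg : ∀ h : Fin p → G, ∀ x : X, ((List.ofFn h).foldr aderiv F) x = 0)
    (hord : ∀ (g : G) (x : X), (g ^ p) • x = x) :
    ∀ (g : G) (x : X), p • F (g • x) = p • F x := by
  intro g x
  set T := LinearMap.funLeft ℤ UnitAddCircle (g • · : X → X)
  have hD : (T - 1) ^ p • F = 0 := by
    funext y
    simpa [T, LinearMap.funLeft_smul_sub_one_pow_eq_foldr_aderiv, List.ofFn_const]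
      using hdeg (fun _ => g) y
  have hT : (T - 1 + 1) ^ p • F = F := by
    funext y
    rw [sub_add_cancel, Module.End.smul_def, LinearMap.funLeft_smul_pow_apply, hord]
  have hpD := congrFun (natCast_mul_smul_eq_zero_of_pow_smul_eq_zero hp hD hT) x
  rw [Module.End.smul_def, Module.End.mul_apply, Module.End.natCast_apply] at hpD
  simpa [T, smul_sub, sub_eq_zero] using hpD
end

section
/- Let G be a countable abelian group acting ergodically by measure-preserving transformations on a probability space X, let k ≥ 1, and let φ, ψ : X → S¹ be measurable phase polynomials of degree < k (all k-fold multiplicative derivatives equal 1 a.e.). If φ/ψ is not a.e. constant, then ‖φ − ψ‖_{L²(X)} ≥ √2 / 2^{k−2}. -/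
/-!
Put `σ = φ · conj ψ`: a unimodular phase polynomial of degree `< k` which is not a.e. constant,
with `‖φ - ψ‖₂ = ‖σ - 1‖₂`. Induct on `k`. By ergodicity `σ` is not invariant, so some `Δ_g σ`
is not a.e. `1`. If `Δ_g σ` is a.e. a constant `c ≠ 1`, then `σ ∘ T_g = c σ`, so measure
preservation forces `∫ σ = 0` and `‖σ - 1‖₂² = 2 - 2 Re ∫ σ = 2`. Otherwise `Δ_g σ` is a
non-constant phase polynomial of degree `< k - 1`, and `‖Δ_g σ - 1‖₂ = ‖σ ∘ T_g - σ‖₂ ≤ 2 ‖σ - 1‖₂`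
transfers the bound for `k - 1` to `k` at the cost of a factor `2`.
-/

open MeasureTheory

/-- The multiplicative derivative `Δ_h φ (x) = φ(h • x) · conj (φ x)` of a complex
valued function on a `G`-space. -/
def mderC {G X : Type*} [SMul G X] (h : G) (φ : X → ℂ) : X → ℂ :=
  fun x => φ (h • x) * (starRingEnd ℂ) (φ x)

open Filter ComplexConjugate

section Ergodic

variable {G X : Type*} [MeasurableSpace X] {μ : Measure X}

theorem ErgodicSMul.of_preimage_smul_eq [Group G] [Countable G] [MulAction G X]
    [IsProbabilityMeasure μ] (hmp : ∀ g : G, MeasurePreserving (fun x => g • x) μ μ)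
    (herg : ∀ s : Set X, MeasurableSet s →
      (∀ g : G, (fun x => g • x) ⁻¹' s = s) → μ s = 0 ∨ μ s = 1) :
    ErgodicSMul G X μ where
  measure_preimage_smul g _ hs := (hmp g).measure_preimage hs.nullMeasurableSet
  aeconst_of_forall_preimage_smul_ae_eq {s} hs hinv := by
    -- the largest strictly invariant subset of `s`; it is a.e. equal to `s` as `G` is countable
    set t := ⋂ g : G, (fun x => g • x) ⁻¹' s
    have ht : MeasurableSet t := .iInter fun g => (hmp g).measurable hs
    have ht_inv : ∀ g : G, (fun x => g • x) ⁻¹' t = t := fun g => by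
      ext x
      simp only [t, Set.mem_iInter, Set.mem_preimage, smul_smul]
      exact (Equiv.mulRight g).forall_congr_right (q := fun h => h • x ∈ s)
    have hts : t ⊆ s := fun x hx => by simpa using Set.mem_iInter.1 hx 1
    have hst : s =ᵐ[μ] t := by
      have hdiff : s \ t ⊆ ⋃ g : G, s \ (fun x => g • x) ⁻¹' s := fun x ⟨hxs, hxt⟩ => by
        obtain ⟨g, hg⟩ := not_forall.1 (mt Set.mem_iInter.2 hxt)
        exact Set.mem_iUnion.2 ⟨g, hxs, hg⟩
      refine ae_eq_set.2 ⟨measure_mono_null hdiff ?_, by simp [Set.sdiff_eq_empty.2 hts]⟩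
      exact measure_iUnion_null fun g => (ae_eq_set.1 (hinv g)).2
    refine hst.eventuallyConst_iff.2 (eventuallyConst_set.2 ?_)
    rcases herg t ht ht_inv with h0 | h1
    · exact .inr (measure_eq_zero_iff_ae_notMem.1 h0)
    · exact .inl ((ae_mem_iff_measure_eq ht.nullMeasurableSet).2 (by rw [h1, measure_univ]))

theorem ErgodicSMul.exists_ae_eq_const_of_ae_comp_smul_eq [SMul G X] [ErgodicSMul G X μ]
    {Y : Type*} [MeasurableSpace Y] [Nonempty Y] [MeasurableSpace.CountablySeparated Y]
    {f : X → Y} (hf : Measurable f) (hinv : ∀ g : G, ∀ᵐ x ∂μ, f (g • x) = f x) :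
    ∃ c, ∀ᵐ x ∂μ, f x = c :=
  exists_eventuallyEq_const_of_forall_separating MeasurableSet fun U hU =>
    eventuallyConst_set.1 <|
      MeasureTheory.aeconst_of_forall_preimage_smul_ae_eq G (hf hU).nullMeasurableSet fun g =>
        (hinv g).mono fun x hx => show (f (g • x) ∈ U) = (f x ∈ U) by rw [hx]

end Ergodic

section UnitCircle

theorem Complex.mul_conj_eq_iff_eq_mul {z w c : ℂ} (hw : ‖w‖ = 1) :
    z * conj w = c ↔ z = c * w := by
  have hw' : conj w * w = 1 := by rw [mul_comm, Complex.mul_conj', hw]; simp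
  constructor
  · rintro rfl; rw [mul_assoc, hw', mul_one]
  · rintro rfl; rw [mul_assoc, mul_comm w, hw', mul_one]

theorem Complex.norm_mul_conj_sub_one {z w : ℂ} (hw : ‖w‖ = 1) :
    ‖z * conj w - 1‖ = ‖z - w‖ := by
  have hw' : w * conj w = 1 := by rw [Complex.mul_conj', hw]; simp
  rw [← hw', ← sub_mul, norm_mul, Complex.norm_conj, hw, mul_one]

theorem Complex.norm_sub_one_sq {z : ℂ} (hz : ‖z‖ = 1) : ‖z - 1‖ ^ 2 = 2 - 2 * z.re := by
  rw [← Complex.normSq_eq_norm_sq, Complex.normSq_sub, Complex.normSq_eq_norm_sq, hz]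
  simp only [one_pow, map_one, mul_one]; ring

end UnitCircle

section PhasePolynomial

variable {G X : Type*} [SMul G X]

theorem mderC_apply_eq_iff {σ : X → ℂ} {g : G} {x : X} (hx : ‖σ x‖ = 1) {c : ℂ} :
    mderC g σ x = c ↔ σ (g • x) = c * σ x :=
  Complex.mul_conj_eq_iff_eq_mul hx

theorem norm_mderC_apply {σ : X → ℂ} (hσ : ∀ x, ‖σ x‖ = 1) (g : G) (x : X) :
    ‖mderC g σ x‖ = 1 := by
  simp [mderC, hσ]

theorem Measurable.mderC [MeasurableSpace X] {σ : X → ℂ} (hσ : Measurable σ) {g : G}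
    (hg : Measurable fun x : X => g • x) : Measurable (mderC g σ) :=
  (hσ.comp hg).mul (Complex.continuous_conj.measurable.comp hσ)

theorem foldr_mderC_mul_conj (L : List G) (φ ψ : X → ℂ) :
    L.foldr mderC (fun x => φ x * conj (ψ x))
      = fun x => L.foldr mderC φ x * conj (L.foldr mderC ψ x) := by
  induction L with
  | nil => rfl
  | cons g L ih =>
    ext x
    simp only [List.foldr_cons, ih, mderC, map_mul, Complex.conj_conj]
    ring

variable [MeasurableSpace X]

variable (G) in
def IsPhasePolyDegLT (μ : Measure X) (k : ℕ) (σ : X → ℂ) : Prop :=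
  ∀ h : Fin k → G, ∀ᵐ x ∂μ, (List.ofFn h).foldr mderC σ x = 1

variable {μ : Measure X} {k : ℕ}

theorem IsPhasePolyDegLT.mderC {σ : X → ℂ} (hσ : IsPhasePolyDegLT G μ (k + 1) σ) (g : G) :
    IsPhasePolyDegLT G μ k (mderC g σ) := fun h => by
  simpa only [List.ofFn_succ', Fin.snoc_castSucc, Fin.snoc_last, List.concat_eq_append,
    List.foldr_concat] using hσ (Fin.snoc h g)

theorem IsPhasePolyDegLT.mul_conj {φ ψ : X → ℂ} (hφ : IsPhasePolyDegLT G μ k φ)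
    (hψ : IsPhasePolyDegLT G μ k ψ) : IsPhasePolyDegLT G μ k fun x => φ x * conj (ψ x) :=
  fun h => by
    filter_upwards [hφ h, hψ h] with x hφx hψx
    simp [foldr_mderC_mul_conj, hφx, hψx]

theorem exists_ae_eq_const_of_forall_ae_mderC_eq_one [ErgodicSMul G X μ] {σ : X → ℂ}
    (hσm : Measurable σ) (hσu : ∀ x, ‖σ x‖ = 1) (h : ∀ g : G, ∀ᵐ x ∂μ, mderC g σ x = 1) :
    ∃ c, ∀ᵐ x ∂μ, σ x = c :=
  ErgodicSMul.exists_ae_eq_const_of_ae_comp_smul_eq hσm fun g =>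
    (h g).mono fun x hx => by simpa using (mderC_apply_eq_iff (hσu x)).1 hx

end PhasePolynomial

section L2

variable {X : Type*} [MeasurableSpace X] {μ : Measure X}

theorem eLpNorm_sub_one_eq_sqrt_two [IsProbabilityMeasure μ] {σ : X → ℂ}
    (hσm : AEStronglyMeasurable σ μ) (hσu : ∀ x, ‖σ x‖ = 1) (hσ : ∫ x, σ x ∂μ = 0) :
    eLpNorm (fun x => σ x - 1) 2 μ = ENNReal.ofReal √2 := by
  have hint : Integrable σ μ := .of_bound hσm 1 (.of_forall fun x => (hσu x).le)
  have hL2 : MemLp (fun x => σ x - 1) 2 μ :=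
    .of_bound (hσm.sub aestronglyMeasurable_const) 2 (.of_forall fun x =>
      (norm_sub_le _ _).trans (by simp [hσu x]; norm_num))
  have hsq : ∫ x, ‖σ x - 1‖ ^ (2 : ℝ) ∂μ = 2 := calc
    ∫ x, ‖σ x - 1‖ ^ (2 : ℝ) ∂μ = ∫ x, (2 - 2 * (σ x).re) ∂μ := by
      congr 1; ext x; rw [Real.rpow_two, Complex.norm_sub_one_sq (hσu x)]
    _ = 2 - 2 * (∫ x, σ x ∂μ).re := by
      have hre : Integrable (fun x => (σ x).re) μ := hint.re
      have hre_int : ∫ x, (σ x).re ∂μ = (∫ x, σ x ∂μ).re := integral_re hint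
      rw [integral_sub (integrable_const _) (hre.const_mul 2), integral_const_mul, hre_int]
      simp
    _ = 2 := by simp [hσ]
  rw [hL2.eLpNorm_eq_integral_rpow_norm two_ne_zero ENNReal.ofNat_ne_top]
  rw [ENNReal.toReal_ofNat, hsq, Real.sqrt_eq_rpow, one_div]

theorem integral_eq_zero_of_ae_comp_eq_mul {T : X → X} (hT : MeasurePreserving T μ μ)
    {σ : X → ℂ} (hσ : AEStronglyMeasurable σ μ) {c : ℂ} (hc : c ≠ 1)
    (h : ∀ᵐ x ∂μ, σ (T x) = c * σ x) : ∫ x, σ x ∂μ = 0 := by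
  have hcomp : ∫ x, σ (T x) ∂μ = ∫ x, σ x ∂μ := by
    rw [← integral_map hT.aemeasurable (by rwa [hT.map_eq]), hT.map_eq]
  rw [integral_congr_ae h, integral_const_mul] at hcomp
  have : (c - 1) * ∫ x, σ x ∂μ = 0 := by rw [sub_mul, hcomp]; ring
  exact (mul_eq_zero.1 this).resolve_left (sub_ne_zero.2 hc)

theorem eLpNorm_comp_sub_le_two_mul {E : Type*} [NormedAddCommGroup E] {T : X → X}
    (hT : MeasurePreserving T μ μ) {σ : X → E} (hσ : AEStronglyMeasurable σ μ)
    {p : ENNReal} (hp : 1 ≤ p) (a : E) :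
    eLpNorm (fun x => σ (T x) - σ x) p μ ≤ 2 * eLpNorm (fun x => σ x - a) p μ := by
  have hσa : AEStronglyMeasurable (fun x => σ x - a) μ := hσ.sub aestronglyMeasurable_const
  have hcomp : eLpNorm (fun x => σ (T x) - a) p μ = eLpNorm (fun x => σ x - a) p μ :=
    eLpNorm_comp_measurePreserving (g := fun x => σ x - a) hσa hT
  calc eLpNorm (fun x => σ (T x) - σ x) p μ
      = eLpNorm ((fun x => σ (T x) - a) - fun x => σ x - a) p μ := by
        congr 1; ext x; exact (sub_sub_sub_cancel_right _ _ _).symm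
    _ ≤ eLpNorm (fun x => σ (T x) - a) p μ + eLpNorm (fun x => σ x - a) p μ :=
        eLpNorm_sub_le (hσa.comp_measurePreserving hT) hσa hp
    _ = 2 * eLpNorm (fun x => σ x - a) p μ := by rw [hcomp, two_mul]

end L2

theorem ofReal_le_eLpNorm_sub_one_of_isPhasePolyDegLT {G X : Type*} [SMul G X]
    [MeasurableSpace X] {μ : Measure X} [IsProbabilityMeasure μ] [ErgodicSMul G X μ]
    (hmp : ∀ g : G, MeasurePreserving (fun x => g • x) μ μ) {k : ℕ} (hk : 1 ≤ k)
    {σ : X → ℂ} (hσm : Measurable σ) (hσu : ∀ x, ‖σ x‖ = 1) (hσ : IsPhasePolyDegLT G μ k σ)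
    (hne : ¬ ∃ c, ∀ᵐ x ∂μ, σ x = c) :
    ENNReal.ofReal (√2 / 2 ^ ((k : ℤ) - 2)) ≤ eLpNorm (fun x => σ x - 1) 2 μ := by
  induction k, hk using Nat.le_induction generalizing σ with
  | base =>
    refine absurd (exists_ae_eq_const_of_forall_ae_mderC_eq_one (G := G) hσm hσu fun g => ?_) hne
    simpa using hσ.mderC g ![]
  | succ k hk ih =>
    obtain ⟨g, hg⟩ : ∃ g : G, ¬ ∀ᵐ x ∂μ, mderC g σ x = 1 := by
      by_contra! h
      exact hne (exists_ae_eq_const_of_forall_ae_mderC_eq_one hσm hσu h)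
    by_cases hconst : ∃ c, ∀ᵐ x ∂μ, mderC g σ x = c
    · obtain ⟨c, hc⟩ := hconst
      have hc1 : c ≠ 1 := by rintro rfl; exact hg hc
      have hint : ∫ x, σ x ∂μ = 0 := integral_eq_zero_of_ae_comp_eq_mul (hmp g)
        hσm.aestronglyMeasurable hc1 (hc.mono fun x hx => (mderC_apply_eq_iff (hσu x)).1 hx)
      rw [eLpNorm_sub_one_eq_sqrt_two hσm.aestronglyMeasurable hσu hint]
      refine ENNReal.ofReal_le_ofReal (div_le_self (by positivity) (one_le_zpow₀ one_le_two ?_))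
      omega
    · have hhalf : √2 / (2 : ℝ) ^ (((k + 1 : ℕ) : ℤ) - 2) = √2 / 2 ^ ((k : ℤ) - 2) / 2 := by
        rw [Nat.cast_succ, show (k : ℤ) + 1 - 2 = (k - 2) + 1 by ring,
          zpow_add_one₀ two_ne_zero, div_div]
      have hnorm : eLpNorm (fun x => mderC g σ x - 1) 2 μ
          = eLpNorm (fun x => σ (g • x) - σ x) 2 μ :=
        eLpNorm_congr_norm_ae (.of_forall fun x => Complex.norm_mul_conj_sub_one (hσu x))
      calc ENNReal.ofReal (√2 / (2 : ℝ) ^ (((k + 1 : ℕ) : ℤ) - 2))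
          = ENNReal.ofReal (√2 / 2 ^ ((k : ℤ) - 2)) / 2 := by
            rw [hhalf, ENNReal.ofReal_div_of_pos two_pos, ENNReal.ofReal_ofNat]
        _ ≤ eLpNorm (fun x => mderC g σ x - 1) 2 μ / 2 := by
            gcongr
            exact ih (hσm.mderC (hmp g).measurable) (norm_mderC_apply hσu g) (hσ.mderC g) hconst
        _ ≤ eLpNorm (fun x => σ x - 1) 2 μ := by
            rw [hnorm, ENNReal.div_le_iff two_ne_zero ENNReal.ofNat_ne_top, mul_comm]
            exact eLpNorm_comp_sub_le_two_mul (hmp g) hσm.aestronglyMeasurable one_le_two 1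

/-- **Separation lemma.**  Let `G` be a countable abelian group acting ergodically by
measure-preserving transformations on a probability space `X`, let `k ≥ 1`, and let
`φ, ψ : X → S¹` be measurable phase polynomials of degree `< k` (all `k`-fold
multiplicative derivatives equal `1` a.e.).  If `φ/ψ` is not a.e. constant, then
`‖φ − ψ‖_{L²(X)} ≥ √2 / 2^{k−2}`. -/
theorem phasePoly_separation {G X : Type*} [CommGroup G] [Countable G]
    [MeasurableSpace X] (μ : Measure X) [IsProbabilityMeasure μ] [MulAction G X]
    (hmp : ∀ g : G, MeasurePreserving (fun x => g • x) μ μ)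
    (herg : ∀ s : Set X, MeasurableSet s →
      (∀ g : G, (fun x => g • x) ⁻¹' s = s) → μ s = 0 ∨ μ s = 1)
    (k : ℕ) (hk : 1 ≤ k)
    (φ ψ : X → ℂ) (hφm : Measurable φ) (hψm : Measurable ψ)
    (hφu : ∀ x, ‖φ x‖ = 1) (hψu : ∀ x, ‖ψ x‖ = 1)
    (hφp : ∀ h : Fin k → G, ∀ᵐ x ∂μ, ((List.ofFn h).foldr mderC φ) x = 1)
    (hψp : ∀ h : Fin k → G, ∀ᵐ x ∂μ, ((List.ofFn h).foldr mderC ψ) x = 1)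
    (hne : ¬ ∃ c : ℂ, ∀ᵐ x ∂μ, φ x = c * ψ x) :
    ENNReal.ofReal (Real.sqrt 2 / (2 : ℝ) ^ ((k : ℤ) - 2)) ≤
      eLpNorm (fun x => φ x - ψ x) 2 μ := by
  have := ErgodicSMul.of_preimage_smul_eq hmp herg
  have hσne : ¬ ∃ c, ∀ᵐ x ∂μ, φ x * conj (ψ x) = c := fun ⟨c, hc⟩ =>
    hne ⟨c, hc.mono fun x hx => (Complex.mul_conj_eq_iff_eq_mul (hψu x)).1 hx⟩
  have hdist : eLpNorm (fun x => φ x - ψ x) 2 μ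
      = eLpNorm (fun x => φ x * conj (ψ x) - 1) 2 μ :=
    eLpNorm_congr_norm_ae (.of_forall fun x => (Complex.norm_mul_conj_sub_one (hψu x)).symm)
  rw [hdist]
  exact ofReal_le_eLpNorm_sub_one_of_isPhasePolyDegLT hmp hk
    (hφm.mul (Complex.continuous_conj.measurable.comp hψm)) (by simp [hφu, hψu])
    (IsPhasePolyDegLT.mul_conj hφp hψp) hσne
end

section
/- Let G be a countable abelian group acting ergodically on a probability space X, and let k ≥ 1. Then the set of phase polynomials of degree < k on X (as elements of L²(X), identified up to a.e. equality), modulo multiplication by unimodular constants, is at most countable. -/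
/-!
A phase polynomial `η` of degree `≤ k` with `‖η - 1‖₂² < 2 / 4 ^ k` is a.e. constant. Indeed each
derivative `Δ_a η` has degree `< k` and `‖Δ_a η - 1‖₂ ≤ 2 ‖η - 1‖₂`, so by induction it is a
constant `c`; then `η (a • x) = c η x`, and integrating (using `∫ η ≠ 0`, which follows from
`‖η - 1‖₂² = 2 - 2 Re ∫ η < 2`) gives `c = 1`, so `η` is invariant and ergodicity makes it
constant. Applied to `φ ψ̄`, two phase polynomials of degree `≤ k` at `L²` distance `< √2 / 2 ^ k`
are proportional. Since `L²(X)` is separable, a countable subset of the phase polynomials of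
degree `< k` comes within that distance of each of them.
-/

open MeasureTheory

open Filter Set ComplexConjugate
open scoped ENNReal Pointwise

namespace Complex

theorem mul_conj_eq_iff_eq_mul_s12 {z w c : ℂ} (hw : ‖w‖ = 1) : z * conj w = c ↔ z = c * w := by
  have hw' : conj w * w = 1 := by rw [conj_mul', hw]; norm_num
  constructor <;> rintro rfl
  · linear_combination (-z) * hw'
  · linear_combination c * hw'

theorem norm_mul_conj_sub_one_s12 {z w : ℂ} (hw : ‖w‖ = 1) : ‖z * conj w - 1‖ = ‖z - w‖ := by
  have hw' : w * conj w = 1 := by rw [mul_conj', hw]; norm_num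
  rw [show z * conj w - 1 = (z - w) * conj w by linear_combination hw', norm_mul, norm_conj, hw,
    mul_one]

theorem norm_sub_one_sq_s12 {z : ℂ} (hz : ‖z‖ = 1) : ‖z - 1‖ ^ 2 = 2 - 2 * z.re := by
  rw [Complex.sq_norm, normSq_sub, ← Complex.sq_norm, hz, normSq_one]
  simp only [map_one, mul_one]
  ring

end Complex

theorem ErgodicSMul.of_forall_preimage_smul_eq {G X : Type*} [Group G] [Countable G]
    [MulAction G X] [MeasurableSpace X] [MeasurableConstSMul G X] {μ : Measure X}
    [IsProbabilityMeasure μ] [SMulInvariantMeasure G X μ]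
    (herg : ∀ s : Set X, MeasurableSet s →
      (∀ g : G, (fun x => g • x) ⁻¹' s = s) → μ s = 0 ∨ μ s = 1) :
    ErgodicSMul G X μ where
  aeconst_of_forall_preimage_smul_ae_eq {s} hs hinv := by
    have hsat : ⋃ g : G, g • s =ᵐ[μ] s := by
      refine (Filter.EventuallyEq.countable_iUnion fun g => ?_).trans (iUnion_const s).eventuallyEq
      simpa only [preimage_smul_inv] using hinv g⁻¹
    have hsat_inv : ∀ b : G, (fun x => b • x) ⁻¹' ⋃ g : G, g • s = ⋃ g : G, g • s := by
      intro b
      rw [preimage_smul, smul_set_iUnion]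
      simp_rw [smul_smul]
      exact (Equiv.mulLeft b⁻¹).iSup_comp (g := fun g => g • s)
    have hsat_meas : MeasurableSet (⋃ g : G, g • s) := .iUnion fun g => hs.const_smul g
    refine EventuallyConst.congr ?_ hsat
    rw [eventuallyConst_set']
    rcases herg _ hsat_meas hsat_inv with h | h
    · exact Or.inl (ae_eq_empty.2 h)
    · exact Or.inr (ae_eq_univ.2 ((prob_compl_eq_zero_iff hsat_meas).2 h))

theorem ae_eq_const_of_forall_ae_smul_eq {G X Y : Type*} [SMul G X] [MeasurableSpace X]
    {μ : Measure X} [ErgodicSMul G X μ] [Nonempty Y] [MeasurableSpace Y]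
    [MeasurableSpace.CountablySeparated Y] {f : X → Y} (hf : Measurable f)
    (hinv : ∀ g : G, (fun x => f (g • x)) =ᵐ[μ] f) : ∃ c, f =ᵐ[μ] fun _ => c :=
  exists_eventuallyEq_const_of_forall_separating MeasurableSet fun U hU =>
    eventuallyConst_set.1 <| aeconst_of_forall_preimage_smul_ae_eq G (s := f ⁻¹' U)
      (hf hU).nullMeasurableSet fun g =>
        ((hinv g).mono fun _ hx => (congrArg (· ∈ U) hx).to_iff).set_eq

section Derivative

variable {G X : Type*} [SMul G X]

theorem foldr_mderC_mul (l : List G) (φ ψ : X → ℂ) :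
    l.foldr mderC (fun x => φ x * ψ x) = fun x => l.foldr mderC φ x * l.foldr mderC ψ x := by
  induction l with
  | nil => rfl
  | cons a l ih =>
    funext x
    simp only [List.foldr_cons, ih, mderC, map_mul]
    ring

theorem foldr_mderC_conj (l : List G) (φ : X → ℂ) :
    l.foldr mderC (fun x => conj (φ x)) = fun x => conj (l.foldr mderC φ x) := by
  induction l with
  | nil => rfl
  | cons a l ih =>
    funext x
    simp only [List.foldr_cons, ih, mderC, map_mul]

end Derivative

/-- Phase polynomial of degree `< k`. -/
structure IsPhasePoly (G : Type*) {X : Type*} [SMul G X] [MeasurableSpace X] (μ : Measure X)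
    (k : ℕ) (φ : X → ℂ) : Prop where
  measurable : Measurable φ
  norm_eq_one : ∀ x, ‖φ x‖ = 1
  foldr_mderC_ae_eq_one : ∀ l : List G, l.length = k → ∀ᵐ x ∂μ, l.foldr mderC φ x = 1

def AEProportional {X : Type*} [MeasurableSpace X] (μ : Measure X) (φ ψ : X → ℂ) : Prop :=
  ∃ c : ℂ, ‖c‖ = 1 ∧ ∀ᵐ x ∂μ, φ x = c * ψ x

theorem isPhasePoly_iff_ofFn {G X : Type*} [SMul G X] [MeasurableSpace X] {μ : Measure X}
    {k : ℕ} {φ : X → ℂ} :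
    IsPhasePoly G μ k φ ↔ Measurable φ ∧ (∀ x, ‖φ x‖ = 1) ∧
      ∀ h : Fin k → G, ∀ᵐ x ∂μ, (List.ofFn h).foldr mderC φ x = 1 := by
  refine ⟨fun hφ => ⟨hφ.measurable, hφ.norm_eq_one,
    fun h => hφ.foldr_mderC_ae_eq_one _ List.length_ofFn⟩, ?_⟩
  rintro ⟨hm, hu, hΔ⟩
  refine ⟨hm, hu, ?_⟩
  rintro l rfl
  simpa [List.ofFn_getElem] using hΔ (fun i => l[i])

namespace IsPhasePoly

variable {G X : Type*} [SMul G X] [MeasurableSpace X] {μ : Measure X} {k : ℕ} {φ ψ : X → ℂ}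

theorem mul_conj (hφ : IsPhasePoly G μ k φ) (hψ : IsPhasePoly G μ k ψ) :
    IsPhasePoly G μ k (fun x => φ x * conj (ψ x)) where
  measurable := by have := hφ.measurable; have := hψ.measurable; fun_prop
  norm_eq_one x := by simp [hφ.norm_eq_one, hψ.norm_eq_one]
  foldr_mderC_ae_eq_one l hl := by
    filter_upwards [hφ.foldr_mderC_ae_eq_one l hl, hψ.foldr_mderC_ae_eq_one l hl] with x hφx hψx
    simp [foldr_mderC_mul, foldr_mderC_conj, hφx, hψx]

theorem mderC [MeasurableConstSMul G X] (hφ : IsPhasePoly G μ (k + 1) φ) (a : G) :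
    IsPhasePoly G μ k (mderC a φ) where
  measurable := by have := hφ.measurable; unfold _root_.mderC; fun_prop
  norm_eq_one x := by simp [_root_.mderC, hφ.norm_eq_one]
  foldr_mderC_ae_eq_one l hl := by
    simpa [List.foldr_append] using hφ.foldr_mderC_ae_eq_one (l ++ [a]) (by simp [hl])

theorem succ [SMulInvariantMeasure G X μ] (hφ : IsPhasePoly G μ k φ) :
    IsPhasePoly G μ (k + 1) φ where
  measurable := hφ.measurable
  norm_eq_one := hφ.norm_eq_one
  foldr_mderC_ae_eq_one
    | a :: l, hl => by
      have hl : l.length = k := by simpa using hl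
      filter_upwards [(tendsto_smul_ae μ a).eventually (hφ.foldr_mderC_ae_eq_one l hl),
        hφ.foldr_mderC_ae_eq_one l hl] with x hax hx
      simp [_root_.mderC, hax, hx]

theorem memLp [IsFiniteMeasure μ] (hφ : IsPhasePoly G μ k φ) (p : ℝ≥0∞) : MemLp φ p μ :=
  .of_bound hφ.measurable.aestronglyMeasurable 1 (.of_forall fun x => (hφ.norm_eq_one x).le)

end IsPhasePoly

section Unimodular

variable {X : Type*} [MeasurableSpace X] {μ : Measure X} {η : X → ℂ}

theorem integrable_norm_sub_one_sq [IsFiniteMeasure μ] (hη : Measurable η)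
    (hu : ∀ x, ‖η x‖ = 1) : Integrable (fun x => ‖η x - 1‖ ^ 2) μ := by
  refine .of_bound (by fun_prop) 4 (.of_forall fun x => ?_)
  have : ‖η x - 1‖ ≤ 2 := (norm_sub_le _ _).trans (by norm_num [hu])
  rw [norm_pow, norm_norm]
  nlinarith [norm_nonneg (η x - 1)]

theorem integral_norm_sub_one_sq [IsProbabilityMeasure μ] (hη : Measurable η)
    (hu : ∀ x, ‖η x‖ = 1) : ∫ x, ‖η x - 1‖ ^ 2 ∂μ = 2 - 2 * (∫ x, η x ∂μ).re := by
  have hint : Integrable η μ :=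
    .of_bound hη.aestronglyMeasurable 1 (.of_forall fun x => (hu x).le)
  simp_rw [Complex.norm_sub_one_sq_s12 (hu _)]
  have hre : Integrable (fun x => (η x).re) μ := hint.re
  have hre_int : ∫ x, (η x).re ∂μ = (∫ x, η x ∂μ).re := integral_re hint
  rw [integral_sub (integrable_const 2) (hre.const_mul 2), integral_const, integral_const_mul,
    hre_int]
  simp

end Unimodular

section Action

variable {G X : Type*} [Group G] [MulAction G X] [MeasurableSpace X] [MeasurableConstSMul G X]
  {μ : Measure X} {η : X → ℂ}

theorem integral_norm_mderC_sub_one_sq_le [IsFiniteMeasure μ] [SMulInvariantMeasure G X μ]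
    (hη : Measurable η) (hu : ∀ x, ‖η x‖ = 1) (a : G) :
    ∫ x, ‖mderC a η x - 1‖ ^ 2 ∂μ ≤ 4 * ∫ x, ‖η x - 1‖ ^ 2 ∂μ := by
  have hI₁ : Integrable (fun x => ‖η (a • x) - 1‖ ^ 2) μ :=
    integrable_norm_sub_one_sq (hη.comp (measurable_const_smul a)) fun x => hu _
  have hI₂ : Integrable (fun x => ‖η x - 1‖ ^ 2) μ := integrable_norm_sub_one_sq hη hu
  have hpointwise :
      ∀ x, ‖mderC a η x - 1‖ ^ 2 ≤ 2 * ‖η (a • x) - 1‖ ^ 2 + 2 * ‖η x - 1‖ ^ 2 := by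
    intro x
    have htri : ‖η (a • x) - η x‖ ≤ ‖η (a • x) - 1‖ + ‖η x - 1‖ :=
      (norm_sub_le_norm_sub_add_norm_sub _ 1 _).trans_eq (by rw [norm_sub_rev 1])
    rw [mderC, Complex.norm_mul_conj_sub_one_s12 (hu x)]
    nlinarith [norm_nonneg (η (a • x) - η x), sq_nonneg (‖η (a • x) - 1‖ - ‖η x - 1‖)]
  calc ∫ x, ‖mderC a η x - 1‖ ^ 2 ∂μ
      ≤ ∫ x, (2 * ‖η (a • x) - 1‖ ^ 2 + 2 * ‖η x - 1‖ ^ 2) ∂μ :=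
        integral_mono_of_nonneg (.of_forall fun x => by positivity)
          ((hI₁.const_mul 2).add (hI₂.const_mul 2)) (.of_forall hpointwise)
    _ = 4 * ∫ x, ‖η x - 1‖ ^ 2 ∂μ := by
        rw [integral_add (hI₁.const_mul 2) (hI₂.const_mul 2), integral_const_mul,
          integral_const_mul, integral_smul_eq_self (fun x => ‖η x - 1‖ ^ 2)]
        ring

theorem ae_eq_const_of_forall_mderC_ae_eq_const [IsProbabilityMeasure μ] [ErgodicSMul G X μ]
    (hη : Measurable η) (hu : ∀ x, ‖η x‖ = 1)
    (hΔ : ∀ a : G, ∃ c, mderC a η =ᵐ[μ] fun _ => c) (hclose : ∫ x, ‖η x - 1‖ ^ 2 ∂μ < 2) :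
    ∃ c, η =ᵐ[μ] fun _ => c := by
  have hne : ∫ x, η x ∂μ ≠ 0 := by
    intro h
    rw [integral_norm_sub_one_sq hη hu, h] at hclose
    simp at hclose
  refine ae_eq_const_of_forall_ae_smul_eq (G := G) hη fun a => ?_
  obtain ⟨c, hc⟩ := hΔ a
  have hshift : (fun x => η (a • x)) =ᵐ[μ] fun x => c * η x :=
    hc.mono fun x hx => (Complex.mul_conj_eq_iff_eq_mul_s12 (hu x)).1 hx
  have hc1 : c = 1 := by
    have h := integral_congr_ae hshift
    rw [integral_smul_eq_self η, integral_const_mul] at h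
    exact (mul_eq_right₀ hne).1 h.symm
  simpa [hc1] using hshift

end Action

namespace IsPhasePoly

variable {G X : Type*} [Group G] [MulAction G X] [MeasurableSpace X] [MeasurableConstSMul G X]
  {μ : Measure X} [IsProbabilityMeasure μ] [ErgodicSMul G X μ]

theorem ae_eq_const_of_integral_lt {k : ℕ} {η : X → ℂ} (hη : IsPhasePoly G μ (k + 1) η)
    (hclose : ∫ x, ‖η x - 1‖ ^ 2 ∂μ < 2 / 4 ^ k) : ∃ c, η =ᵐ[μ] fun _ => c := by
  induction k generalizing η with
  | zero =>
    exact ae_eq_const_of_forall_mderC_ae_eq_const hη.measurable hη.norm_eq_one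
      (fun a => ⟨1, hη.foldr_mderC_ae_eq_one [a] rfl⟩) (by simpa using hclose)
  | succ k ih =>
    refine ae_eq_const_of_forall_mderC_ae_eq_const hη.measurable hη.norm_eq_one
      (fun a => ih (hη.mderC a) ?_) (hclose.trans_le ?_)
    · calc ∫ x, ‖_root_.mderC a η x - 1‖ ^ 2 ∂μ ≤ 4 * ∫ x, ‖η x - 1‖ ^ 2 ∂μ :=
            integral_norm_mderC_sub_one_sq_le hη.measurable hη.norm_eq_one a
        _ < 4 * (2 / 4 ^ (k + 1)) := by gcongr
        _ = 2 / 4 ^ k := by rw [pow_succ]; field_simp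
    · exact div_le_self zero_le_two (one_le_pow₀ (by norm_num))

theorem aeProportional_of_integral_lt {k : ℕ} {φ ψ : X → ℂ} (hφ : IsPhasePoly G μ (k + 1) φ)
    (hψ : IsPhasePoly G μ (k + 1) ψ) (hclose : ∫ x, ‖φ x - ψ x‖ ^ 2 ∂μ < 2 / 4 ^ k) :
    AEProportional μ φ ψ := by
  obtain ⟨c, hc⟩ := (hφ.mul_conj hψ).ae_eq_const_of_integral_lt <| by
    simpa only [Complex.norm_mul_conj_sub_one_s12 (hψ.norm_eq_one _)] using hclose
  obtain ⟨x, hx⟩ := hc.exists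
  refine ⟨c, ?_, hc.mono fun x hx => (Complex.mul_conj_eq_iff_eq_mul_s12 (hψ.norm_eq_one x)).1 hx⟩
  rw [← show φ x * conj (ψ x) = c from hx, norm_mul, Complex.norm_conj, hφ.norm_eq_one,
    hψ.norm_eq_one, one_mul]

end IsPhasePoly

theorem exists_countable_forall_exists_rel_of_dist_lt {α E : Type*} [PseudoMetricSpace E]
    [TopologicalSpace.SeparableSpace E] (f : α → E) {r : ℝ} (hr : 0 < r) {R : α → α → Prop}
    (hR : ∀ a b, dist (f a) (f b) < r → R a b) :
    ∃ D : Set α, D.Countable ∧ ∀ a, ∃ b ∈ D, R a b := by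
  obtain ⟨t, htf, ht, hdense⟩ :=
    (TopologicalSpace.IsSeparable.of_separableSpace (range f)).exists_countable_dense_subset
  choose g hg using htf
  have := ht.to_subtype
  refine ⟨range fun y : t => g y.2, countable_range _, fun a => ?_⟩
  obtain ⟨y, hyt, hy⟩ := Metric.mem_closure_iff.1 (hdense (mem_range_self a)) r hr
  exact ⟨_, mem_range_self ⟨y, hyt⟩, hR _ _ (by rwa [hg hyt])⟩

theorem MeasureTheory.MemLp.dist_toLp_sq {X E : Type*} [MeasurableSpace X] {μ : Measure X}
    [NormedAddCommGroup E] {f g : X → E} (hf : MemLp f 2 μ) (hg : MemLp g 2 μ) :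
    dist (hf.toLp f) (hg.toLp g) ^ 2 = ∫ x, ‖f x - g x‖ ^ 2 ∂μ := by
  rw [dist_eq_norm, ← MemLp.toLp_sub, Lp.norm_toLp,
    (hf.sub hg).eLpNorm_eq_integral_rpow_norm two_ne_zero ENNReal.ofNat_ne_top,
    ENNReal.toReal_ofReal (by positivity), ← Real.rpow_natCast, ← Real.rpow_mul (by positivity)]
  norm_num

theorem phasePoly_countable_mod_constants_general {G X : Type*} [CommGroup G] [Countable G]
    [MeasurableSpace X] [MeasurableSpace.CountablyGenerated X]
    (μ : Measure X) [IsProbabilityMeasure μ] [MulAction G X]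
    (hmp : ∀ g : G, MeasurePreserving (fun x => g • x) μ μ)
    (herg : ∀ s : Set X, MeasurableSet s →
      (∀ g : G, (fun x => g • x) ⁻¹' s = s) → μ s = 0 ∨ μ s = 1)
    (k : ℕ) :
    ∃ D : Set (X → ℂ), D.Countable ∧
      (∀ ψ ∈ D, Measurable ψ ∧ (∀ x, ‖ψ x‖ = 1) ∧
        (∀ h : Fin k → G, ∀ᵐ x ∂μ, ((List.ofFn h).foldr mderC ψ) x = 1)) ∧
      ∀ φ : X → ℂ, Measurable φ → (∀ x, ‖φ x‖ = 1) →
        (∀ h : Fin k → G, ∀ᵐ x ∂μ, ((List.ofFn h).foldr mderC φ) x = 1) →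
        ∃ ψ ∈ D, ∃ c : ℂ, ‖c‖ = 1 ∧ ∀ᵐ x ∂μ, φ x = c * ψ x := by
  have : MeasurableConstSMul G X := ⟨fun g => (hmp g).measurable⟩
  have : SMulInvariantMeasure G X μ :=
    ⟨fun g _ hs => (hmp g).measure_preimage hs.nullMeasurableSet⟩
  have : ErgodicSMul G X μ := .of_forall_preimage_smul_eq herg
  have : Fact ((2 : ℝ≥0∞) ≠ ∞) := ⟨ENNReal.ofNat_ne_top⟩
  obtain ⟨D, hD, hcover⟩ := exists_countable_forall_exists_rel_of_dist_lt
    (fun φ : {φ // IsPhasePoly G μ k φ} => (φ.2.memLp 2).toLp φ.1)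
    (Real.sqrt_pos.2 (by positivity : (0 : ℝ) < 2 / 4 ^ k)) fun φ ψ hdist =>
      φ.2.succ.aeProportional_of_integral_lt ψ.2.succ <| by
        rwa [Real.lt_sqrt dist_nonneg, MemLp.dist_toLp_sq] at hdist
  refine ⟨Subtype.val '' D, hD.image _, ?_, fun φ hm hu hΔ => ?_⟩
  · rintro _ ⟨ψ, -, rfl⟩
    exact isPhasePoly_iff_ofFn.1 ψ.2
  · obtain ⟨ψ, hψD, hψ⟩ := hcover ⟨φ, isPhasePoly_iff_ofFn.2 ⟨hm, hu, hΔ⟩⟩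
    exact ⟨ψ, mem_image_of_mem _ hψD, hψ⟩

/-- **At most countably many phase polynomials modulo constants.**
Let `G` be a countable abelian group acting ergodically on a (separable, i.e.
countably generated mod null sets) probability space `X`, and `k ≥ 1`.  Then the set
of phase polynomials of degree `< k` on `X`, identified up to a.e. equality and up to
multiplication by unimodular constants, is at most countable: there is a countable set
`D` of phase polynomials such that every phase polynomial of degree `< k` agrees a.e.
with a constant multiple of a member of `D`. -/
theorem phasePoly_countable_mod_constants {G X : Type*} [CommGroup G] [Countable G]
    [MeasurableSpace X] [MeasurableSpace.CountablyGenerated X]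
    (μ : Measure X) [IsProbabilityMeasure μ] [MulAction G X]
    (hmp : ∀ g : G, MeasurePreserving (fun x => g • x) μ μ)
    (herg : ∀ s : Set X, MeasurableSet s →
      (∀ g : G, (fun x => g • x) ⁻¹' s = s) → μ s = 0 ∨ μ s = 1)
    (k : ℕ) (hk : 1 ≤ k) :
    ∃ D : Set (X → ℂ), D.Countable ∧
      (∀ ψ ∈ D, Measurable ψ ∧ (∀ x, ‖ψ x‖ = 1) ∧
        (∀ h : Fin k → G, ∀ᵐ x ∂μ, ((List.ofFn h).foldr mderC ψ) x = 1)) ∧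
      ∀ φ : X → ℂ, Measurable φ → (∀ x, ‖φ x‖ = 1) →
        (∀ h : Fin k → G, ∀ᵐ x ∂μ, ((List.ofFn h).foldr mderC φ) x = 1) →
        ∃ ψ ∈ D, ∃ c : ℂ, ‖c‖ = 1 ∧ ∀ᵐ x ∂μ, φ x = c * ψ x :=
  phasePoly_countable_mod_constants_general μ hmp herg k
end
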